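/- arXiv:1010.4436 — 2 statements merged into one kernel-verified Lean document; each statement's English description precedes it below -/
import Mathlib

section
/- The function μ_PE(r) defined piecewise as 37r²/216 for r ∈ [1, 3/2), as -r²/8 + 4 - 8/r + 9/(2r²) for r ∈ [3/2, 2), and as 1 - 3/(2r²) for r ∈ [2, ∞), is strictly increasing on [1, ∞). -/
noncomputable def muPE (r : ℝ) : ℝ :=
  if r < 3/2 then 37 * r^2 / 216
  else if r < 2 then -r^2/8 + 4 - 8/r + 9/(2*r^2)
  else 1 - 3/(2*r^2)

private lemma m2 (x y : ℝ) (hx : 3/2 ≤ x) (hxy : x < y) (hy : y ≤ 2) :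
    -x^2/8 + 4 - 8/x + 9/(2*x^2) < -y^2/8 + 4 - 8/y + 9/(2*y^2) := by
  have hx0 : (0:ℝ) < x := by linarith
  have hy0 : (0:ℝ) < y := by linarith
  have hy1 : 3/2 ≤ y := by linarith
  have hx2 : x ≤ 2 := by linarith
  have key : 0 < 64*x*y - x^2*y^2*(x+y) - 36*(x+y) := by
    nlinarith [mul_nonneg (sub_nonneg.2 hx2) (sub_nonneg.2 hy),
      mul_nonneg (sub_nonneg.2 hx) (sub_nonneg.2 hy1),
      mul_nonneg (mul_nonneg (sub_nonneg.2 hx2) (sub_nonneg.2 hy)) (sub_nonneg.2 hx),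
      mul_nonneg (mul_nonneg (sub_nonneg.2 hx2) (sub_nonneg.2 hy)) (sub_nonneg.2 hy1),
      sq_nonneg (x-y), sq_nonneg (x*y-3), sq_nonneg (x+y-7/2),
      mul_nonneg (mul_nonneg (sub_nonneg.2 hx) (sub_nonneg.2 hy1))
        (mul_nonneg (sub_nonneg.2 hx2) (sub_nonneg.2 hy))]
  rw [← sub_pos]
  have expand : (-y^2/8 + 4 - 8/y + 9/(2*y^2)) - (-x^2/8 + 4 - 8/x + 9/(2*x^2))
      = (y - x) * (64*x*y - x^2*y^2*(x+y) - 36*(x+y)) / (8*x^2*y^2) := by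
    field_simp
    ring
  rw [expand]
  have : (0:ℝ) < y - x := by linarith
  positivity

private lemma m3 (x y : ℝ) (hx : 2 ≤ x) (hxy : x < y) :
    1 - 3/(2*x^2) < 1 - 3/(2*y^2) := by
  have hx0 : (0:ℝ) < x := by linarith
  have h : 3/(2*y^2) < 3/(2*x^2) := by
    apply div_lt_div_of_pos_left (by norm_num) (by positivity)
    nlinarith
  linarith

private lemma f3_ge (y : ℝ) (hy : 2 ≤ y) : 5/8 ≤ 1 - 3/(2*y^2) := by
  have hy0 : (0:ℝ) < y := by linarith
  have h : 3/(2*y^2) ≤ 3/8 := by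
    rw [div_le_div_iff₀ (by positivity) (by norm_num)]
    nlinarith
  linarith

theorem muPE_strictMonoOn : StrictMonoOn muPE (Set.Ici 1) := by
  intro x hx y hy hxy
  simp only [Set.mem_Ici] at hx hy
  unfold muPE
  split_ifs with a b c d e f g h
  · -- x<3/2, y<3/2
    nlinarith
  · -- x<3/2, 3/2 ≤ y < 2
    push_neg at b
    have hA : 37 * x^2 / 216 < 37/96 := by nlinarith
    have hB : (37:ℝ)/96 ≤ -y^2/8 + 4 - 8/y + 9/(2*y^2) := by
      rcases eq_or_lt_of_le b with hh | hh
      · rw [← hh]; norm_num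
      · have := m2 (3/2) y (le_refl _) hh (le_of_lt c)
        norm_num at this ⊢
        linarith
    linarith
  · -- x<3/2, y ≥ 2
    push_neg at c
    have hA : 37 * x^2 / 216 < 37/96 := by nlinarith
    have hB := f3_ge y c
    linarith
  · -- 3/2 ≤ x < 2, y < 3/2: contradiction
    push_neg at a; linarith
  · -- both middle
    push_neg at a
    exact m2 x y a hxy (le_of_lt f)
  · -- middle to last
    push_neg at a f
    have hA := m2 x 2 a (by linarith) (le_refl _)
    have hB := f3_ge y f
    norm_num at hA
    linarith
  · -- x ≥ 2, y < 3/2: contradiction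
    push_neg at d; linarith
  · -- x ≥ 2, y < 2: contradiction
    push_neg at d; linarith
  · -- both last
    push_neg at d
    exact m3 x y d hxy
end

section
/- For all r ∈ [1, ∞) and τ ∈ (0, ∞), μ_PE(r) > μ_CS(τ) fails in general; however, for each fixed t ∈ [1, ∞), μ_PE(t) > μ_CS(t), i.e., at equal expansion parameter values t ≥ 1, the arc probability of the proportional-edge PCD strictly exceeds that of the central similarity PCD. -/
noncomputable def muCS (τ : ℝ) : ℝ :=
  if τ ≤ 1 then τ^2/6
  else τ * (4*τ - 1) / (2 * (1 + 2*τ) * (2 + τ))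

theorem muPE_of_lt_three_halves {r : ℝ} (hr : r < 3/2) : muPE r = 37 * r^2 / 216 :=
  if_pos hr

theorem muPE_of_three_halves_le_of_lt_two {r : ℝ} (h₁ : 3/2 ≤ r) (h₂ : r < 2) :
    muPE r = -r^2/8 + 4 - 8/r + 9/(2*r^2) := by
  rw [muPE, if_neg h₁.not_gt, if_pos h₂]

theorem muPE_of_two_le {r : ℝ} (hr : 2 ≤ r) : muPE r = 1 - 3/(2*r^2) := by
  rw [muPE, if_neg (by linarith), if_neg hr.not_gt]

theorem muCS_of_one_lt {τ : ℝ} (hτ : 1 < τ) :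
    muCS τ = τ * (4*τ - 1) / (2 * (1 + 2*τ) * (2 + τ)) :=
  if_neg hτ.not_ge

theorem muCS_lt_of_one_le {τ : ℝ} (hτ : 1 ≤ τ) : muCS τ < 37 * τ^2 / 216 := by
  rcases hτ.eq_or_lt with rfl | hτ
  · norm_num [muCS]
  rw [muCS_of_one_lt hτ, div_lt_div_iff₀ (by positivity) (by norm_num)]
  nlinarith [mul_nonneg (sub_nonneg.2 hτ.le) (sq_nonneg τ), sq_nonneg (τ - 1)]

theorem muCS_lt_three_eighths {τ : ℝ} (h₁ : 1 < τ) (h₂ : τ ≤ 2) : muCS τ < 3/8 := by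
  rw [muCS_of_one_lt h₁, div_lt_div_iff₀ (by positivity) (by norm_num)]
  nlinarith

theorem three_eighths_lt_muPE {r : ℝ} (h₁ : 3/2 ≤ r) (h₂ : r < 2) : 3/8 < muPE r := by
  have hr : 0 < r := by linarith
  have h₁' := sub_nonneg.2 h₁
  have h₂' := sub_nonneg.2 h₂.le
  have h_poly : -r^2/8 + 4 - 8/r + 9/(2*r^2) = (-r^4 + 32*r^2 - 64*r + 36) / (8*r^2) := by
    field_simp
    ring
  rw [muPE_of_three_halves_le_of_lt_two h₁ h₂, h_poly, lt_div_iff₀ (by positivity)]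
  nlinarith [mul_nonneg h₁' h₂', mul_nonneg (mul_nonneg h₁' h₂') h₁',
    mul_nonneg (mul_nonneg h₁' h₂') h₂']

theorem muCS_lt_one_sub_div_sq {τ : ℝ} (hτ : 3/2 ≤ τ) : muCS τ < 1 - 3/(2*τ^2) := by
  have hτ₀ : 0 < τ := by linarith
  rw [muCS_of_one_lt (by linarith), one_sub_div (by positivity),
    div_lt_div_iff₀ (by positivity) (by positivity)]
  nlinarith [mul_nonneg (sub_nonneg.2 hτ) (sq_nonneg τ), sq_nonneg (τ - 1)]

theorem muPE_gt_muCS : ∀ t : ℝ, 1 ≤ t → muPE t > muCS t := by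
  intro t ht
  rcases lt_or_ge t (3/2) with h₁ | h₁
  · rw [muPE_of_lt_three_halves h₁]
    exact muCS_lt_of_one_le ht
  rcases lt_or_ge t 2 with h₂ | h₂
  · exact (muCS_lt_three_eighths (by linarith) h₂.le).trans (three_eighths_lt_muPE h₁ h₂)
  · rw [muPE_of_two_le h₂]
    exact muCS_lt_one_sub_div_sq h₁
end
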